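/- arXiv:2401.16494 — 3 statements merged into one kernel-verified Lean document; each statement's English description precedes it below -/
import Mathlib

section
/- For all t, θ ∈ ℝ, let p(z) = e^{-4iθ}(√3·i·t·e^{2iθ} z² − 1) and q(z) = z³ − √3·i·t·e^{-2iθ} z, regarded as complex polynomials of degree at most 3. Then Res₃(p, q) = −e^{-12iθ}(1 + 3t²)²; in particular Res₃(p, q) ≠ 0 for all real t and θ. -/
open Polynomial Complex

/-!
`Res₃(p, q)` is Mathlib's `resultant q p 3 3`. Writing `q = z (z - s) (z + s)` with `s² = c`,
multiplicativity of the resultant gives `Res₃(p, q) = p(0) p(s) p(-s)`, and for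
`p = a (b z² - 1)` this is `-a³ (1 - b c)²`. In the tetrahedral family `b c = -3t²`
and `a³ = e^{-12iθ}`.
-/

/-- The `2N × 2N` Sylvester matrix of `p` and `q`, both regarded as polynomials of
formal degree `N`: the first `N` rows are the shifts of `(p_0, …, p_N)` and the last
`N` rows are the shifts of `(q_0, …, q_N)`.  `sylvesterRes N p q` is its determinant,
i.e. the resultant `Res_N(p, q)`. -/
noncomputable def sylvesterRes (N : ℕ) (p q : Polynomial ℂ) : ℂ :=
  Matrix.det (Matrix.of fun i j : Fin (2 * N) =>
    if (i : ℕ) < N then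
      (if (i : ℕ) ≤ (j : ℕ) ∧ (j : ℕ) ≤ (i : ℕ) + N then p.coeff ((j : ℕ) - (i : ℕ)) else 0)
    else
      (if (i : ℕ) - N ≤ (j : ℕ) ∧ (j : ℕ) ≤ ((i : ℕ) - N) + N then
        q.coeff ((j : ℕ) - ((i : ℕ) - N)) else 0))

-- Mathlib's `sylvester f g m n` stores the shifts in columns, those of `g` first.
theorem sylvesterRes_eq_resultant (N : ℕ) (p q : ℂ[X]) :
    sylvesterRes N p q = resultant q p N N := by
  have hmat : (Matrix.of fun i j : Fin (2 * N) =>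
      if (i : ℕ) < N then
        (if (i : ℕ) ≤ (j : ℕ) ∧ (j : ℕ) ≤ (i : ℕ) + N then p.coeff ((j : ℕ) - (i : ℕ)) else 0)
      else
        (if (i : ℕ) - N ≤ (j : ℕ) ∧ (j : ℕ) ≤ ((i : ℕ) - N) + N then
          q.coeff ((j : ℕ) - ((i : ℕ) - N)) else 0)) =
      (sylvester q p N N).transpose.submatrix (finCongr (two_mul N)) (finCongr (two_mul N)) := by
    ext i j
    obtain ⟨i, rfl⟩ := (finCongr (two_mul N)).symm.surjective i
    obtain ⟨j, rfl⟩ := (finCongr (two_mul N)).symm.surjective j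
    induction i using Fin.addCases
    all_goals
      simp only [sylvester, Matrix.submatrix_apply, Matrix.transpose_apply, Matrix.of_apply,
        Equiv.apply_symm_apply, Fin.addCases_left, Fin.addCases_right]
      simp
  rw [sylvesterRes, hmat, Matrix.det_submatrix_equiv_self, Matrix.det_transpose, resultant]

theorem resultant_prod_X_sub_C_left {R ι : Type*} [CommRing R] [Nontrivial R]
    (s : Finset ι) (r : ι → R) (g : R[X]) {n : ℕ} (hg : g.natDegree ≤ n) :
    (∏ i ∈ s, (X - C (r i))).resultant g s.card n = ∏ i ∈ s, g.eval (r i) := by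
  rw [← natDegree_finsetProd_X_sub_C_eq_card s r, resultant_prod_left _ _ _ _ (by simp) hg]
  refine Finset.prod_congr rfl fun i _ ↦ ?_
  rw [natDegree_X_sub_C, resultant_X_sub_C_left _ _ _ hg]

theorem sylvesterRes_three_even_odd (a b c : ℂ) :
    sylvesterRes 3 (C a * (C b * X ^ 2 - 1)) (X ^ 3 - C c * X) = -a ^ 3 * (1 - b * c) ^ 2 := by
  obtain ⟨s, rfl⟩ := IsAlgClosed.exists_eq_mul_self c
  have hroots : (X ^ 3 - C (s * s) * X : ℂ[X]) = ∏ i : Fin 3, (X - C (![0, s, -s] i)) := by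
    simp only [Fin.prod_univ_three, Matrix.cons_val, map_neg, map_mul, map_zero]
    ring
  have hdeg : (C a * (C b * X ^ 2 - 1) : ℂ[X]).natDegree ≤ 3 := by
    compute_degree!
  have hres := resultant_prod_X_sub_C_left Finset.univ ![0, s, -s] _ hdeg
  rw [Finset.card_fin] at hres
  rw [sylvesterRes_eq_resultant, hroots, hres]
  simp [Fin.prod_univ_three]
  ring

/-- for real `t, θ`, the polynomials
`p(z) = e^{-4iθ}(√3·i·t·e^{2iθ} z² − 1)` and `q(z) = z³ − √3·i·t·e^{-2iθ} z`
(arising from the rotated–isorotated tetrahedral family of degree-3 rational maps)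
satisfy `Res₃(p, q) = −e^{-12iθ}(1 + 3t²)² ≠ 0`. -/
theorem resultant_tetrahedral_family (t θ : ℝ) :
    sylvesterRes 3
        (Polynomial.C (Complex.exp (-(4 * Complex.I * θ))) *
          (Polynomial.C ((Real.sqrt 3 : ℂ) * Complex.I * t * Complex.exp (2 * Complex.I * θ)) *
            Polynomial.X ^ 2 - 1))
        (Polynomial.X ^ 3 -
          Polynomial.C ((Real.sqrt 3 : ℂ) * Complex.I * t * Complex.exp (-(2 * Complex.I * θ))) *
            Polynomial.X)
      = -Complex.exp (-(12 * Complex.I * θ)) * (1 + 3 * (t : ℂ) ^ 2) ^ 2 ∧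
    sylvesterRes 3
        (Polynomial.C (Complex.exp (-(4 * Complex.I * θ))) *
          (Polynomial.C ((Real.sqrt 3 : ℂ) * Complex.I * t * Complex.exp (2 * Complex.I * θ)) *
            Polynomial.X ^ 2 - 1))
        (Polynomial.X ^ 3 -
          Polynomial.C ((Real.sqrt 3 : ℂ) * Complex.I * t * Complex.exp (-(2 * Complex.I * θ))) *
            Polynomial.X)
      ≠ 0 := by
  have hcube : exp (-(4 * I * θ)) ^ 3 = exp (-(12 * I * θ)) := by
    rw [← exp_nat_mul]; ring_nf
  have hbc : ((Real.sqrt 3 : ℂ) * I * t * exp (2 * I * θ)) *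
      ((Real.sqrt 3 : ℂ) * I * t * exp (-(2 * I * θ))) = -(3 * (t : ℂ) ^ 2) := by
    have h3 : (Real.sqrt 3 : ℂ) ^ 2 = 3 := by norm_cast; simp
    calc _ = (Real.sqrt 3 : ℂ) ^ 2 * I ^ 2 * (t : ℂ) ^ 2 *
          exp (2 * I * θ + -(2 * I * θ)) := by rw [exp_add]; ring
      _ = -(3 * (t : ℂ) ^ 2) := by simp [h3]
  have ht : 1 + 3 * (t : ℂ) ^ 2 ≠ 0 := by
    exact_mod_cast (by positivity : (0 : ℝ) < 1 + 3 * t ^ 2).ne'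
  rw [sylvesterRes_three_even_odd, hbc, hcube, sub_neg_eq_add]
  exact ⟨rfl, mul_ne_zero (neg_ne_zero.2 (exp_ne_zero _)) (pow_ne_zero 2 ht)⟩
end

section
/- Let N ≥ 1 and let p, q, p', q' ∈ ℂ[z] be polynomials of degree at most N with max(deg p, deg q) = N, max(deg p', deg q') = N, Res_N(p, q) = 1, Res_N(p', q') = 1, and p·q' = p'·q. Then there exists c ∈ ℂ with c^(2N) = 1 such that p' = c·p and q' = c·q. -/
open Polynomial

lemma sylvesterRes_aux_smul (N : ℕ) (c : ℂ) (p q : Polynomial ℂ) :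
    Matrix.det (Matrix.of fun i j : Fin (2 * N) =>
    if (i : ℕ) < N then
      (if (i : ℕ) ≤ (j : ℕ) ∧ (j : ℕ) ≤ (i : ℕ) + N then (C c * p).coeff ((j : ℕ) - (i : ℕ)) else 0)
    else
      (if (i : ℕ) - N ≤ (j : ℕ) ∧ (j : ℕ) ≤ ((i : ℕ) - N) + N then
        (C c * q).coeff ((j : ℕ) - ((i : ℕ) - N)) else 0)) =
    c ^ (2 * N) * Matrix.det (Matrix.of fun i j : Fin (2 * N) =>
    if (i : ℕ) < N then
      (if (i : ℕ) ≤ (j : ℕ) ∧ (j : ℕ) ≤ (i : ℕ) + N then p.coeff ((j : ℕ) - (i : ℕ)) else 0)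
    else
      (if (i : ℕ) - N ≤ (j : ℕ) ∧ (j : ℕ) ≤ ((i : ℕ) - N) + N then
        q.coeff ((j : ℕ) - ((i : ℕ) - N)) else 0)) := by
  rw [show (Matrix.of fun i j : Fin (2 * N) =>
    if (i : ℕ) < N then
      (if (i : ℕ) ≤ (j : ℕ) ∧ (j : ℕ) ≤ (i : ℕ) + N then (C c * p).coeff ((j : ℕ) - (i : ℕ)) else 0)
    else
      (if (i : ℕ) - N ≤ (j : ℕ) ∧ (j : ℕ) ≤ ((i : ℕ) - N) + N then
        (C c * q).coeff ((j : ℕ) - ((i : ℕ) - N)) else 0)) =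
    c • (Matrix.of fun i j : Fin (2 * N) =>
    if (i : ℕ) < N then
      (if (i : ℕ) ≤ (j : ℕ) ∧ (j : ℕ) ≤ (i : ℕ) + N then p.coeff ((j : ℕ) - (i : ℕ)) else 0)
    else
      (if (i : ℕ) - N ≤ (j : ℕ) ∧ (j : ℕ) ≤ ((i : ℕ) - N) + N then
        q.coeff ((j : ℕ) - ((i : ℕ) - N)) else 0)) from ?_, Matrix.det_smul,
    Fintype.card_fin]
  ext i j
  simp only [Matrix.of_apply, Matrix.smul_apply, smul_eq_mul, coeff_C_mul, mul_ite, mul_zero]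

lemma sylvesterRes_smul (N : ℕ) (c : ℂ) (p q : Polynomial ℂ) :
    sylvesterRes N (C c * p) (C c * q) = c ^ (2 * N) * sylvesterRes N p q :=
  sylvesterRes_aux_smul N c p q

lemma isCoprime_of_sylvesterRes (N : ℕ) (hN : 1 ≤ N) (p q : Polynomial ℂ)
    (hp : p.natDegree ≤ N) (hq : q.natDegree ≤ N)
    (hres : sylvesterRes N p q = 1) : IsCoprime p q := by
  set M : Matrix (Fin (2 * N)) (Fin (2 * N)) ℂ := Matrix.of fun i j : Fin (2 * N) =>
    if (i : ℕ) < N then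
      (if (i : ℕ) ≤ (j : ℕ) ∧ (j : ℕ) ≤ (i : ℕ) + N then p.coeff ((j : ℕ) - (i : ℕ)) else 0)
    else
      (if (i : ℕ) - N ≤ (j : ℕ) ∧ (j : ℕ) ≤ ((i : ℕ) - N) + N then
        q.coeff ((j : ℕ) - ((i : ℕ) - N)) else 0) with hM
  have hdet : IsUnit M.det := by
    rw [show M.det = 1 from hres]; exact isUnit_one
  set e : Fin (2 * N) → ℂ := Pi.single ⟨0, by omega⟩ 1 with he
  set v : Fin (2 * N) → ℂ := Matrix.vecMul e M⁻¹ with hv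
  have hvM : Matrix.vecMul v M = e := by
    rw [hv, Matrix.vecMul_vecMul, Matrix.nonsing_inv_mul M hdet, Matrix.vecMul_one]
  set a : Polynomial ℂ := ∑ k : Fin (2 * N),
      if (k : ℕ) < N then C (v k) * X ^ (k : ℕ) else 0 with ha
  set b : Polynomial ℂ := ∑ k : Fin (2 * N),
      if (k : ℕ) < N then 0 else C (v k) * X ^ ((k : ℕ) - N) with hb
  have key : ∀ n : ℕ, (a * p + b * q).coeff n = ∑ k : Fin (2 * N),
      v k * (if (k : ℕ) < N then
        (if (k : ℕ) ≤ n then p.coeff (n - (k : ℕ)) else 0)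
      else
        (if (k : ℕ) - N ≤ n then q.coeff (n - ((k : ℕ) - N)) else 0)) := by
    intro n
    rw [coeff_add, ha, hb, Finset.sum_mul, Finset.sum_mul, finset_sum_coeff, finset_sum_coeff,
      ← Finset.sum_add_distrib]
    refine Finset.sum_congr rfl fun k _ => ?_
    by_cases hk : (k : ℕ) < N
    · simp only [hk, if_true, zero_mul, coeff_zero, add_zero]
      rw [show C (v k) * X ^ (k : ℕ) * p = C (v k) * (p * X ^ (k : ℕ)) by ring,
        coeff_C_mul, coeff_mul_X_pow']
    · simp only [hk, if_false, zero_mul, coeff_zero, zero_add]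
      rw [show C (v k) * X ^ ((k : ℕ) - N) * q = C (v k) * (q * X ^ ((k : ℕ) - N)) by ring,
        coeff_C_mul, coeff_mul_X_pow']
  have habq : a * p + b * q = 1 := by
    ext n
    by_cases hn : n < 2 * N
    · have h2 := congrFun hvM ⟨n, hn⟩
      rw [Matrix.vecMul, dotProduct] at h2
      rw [key n, coeff_one]
      have hsum : (∑ k : Fin (2 * N),
          v k * (if (k : ℕ) < N then
            (if (k : ℕ) ≤ n then p.coeff (n - (k : ℕ)) else 0)
          else
            (if (k : ℕ) - N ≤ n then q.coeff (n - ((k : ℕ) - N)) else 0))) =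
          ∑ k : Fin (2 * N), v k * M k ⟨n, hn⟩ := by
        refine Finset.sum_congr rfl fun k _ => ?_
        congr 1
        rw [hM]
        simp only [Matrix.of_apply]
        by_cases hk : (k : ℕ) < N
        · simp only [hk, if_true]
          by_cases h1 : (k : ℕ) ≤ n
          · by_cases h3 : n ≤ (k : ℕ) + N
            · simp [h1, h3]
            · rw [if_pos h1, if_neg (by tauto), coeff_eq_zero_of_natDegree_lt (by omega)]
          · rw [if_neg h1, if_neg (by tauto)]
        · simp only [hk, if_false]
          by_cases h1 : (k : ℕ) - N ≤ n
          · by_cases h3 : n ≤ (k : ℕ) - N + N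
            · simp [h1, h3]
            · rw [if_pos h1, if_neg (by tauto), coeff_eq_zero_of_natDegree_lt (by omega)]
          · rw [if_neg h1, if_neg (by tauto)]
      rw [hsum, h2, he, Pi.single_apply]
      simp only [Fin.mk.injEq]
    · rw [key n, coeff_one, if_neg (by omega)]
      refine Finset.sum_eq_zero fun k _ => ?_
      have hk2 := k.isLt
      by_cases hk : (k : ℕ) < N
      · rw [if_pos hk, if_pos (by omega), coeff_eq_zero_of_natDegree_lt (by omega), mul_zero]
      · rw [if_neg hk, if_pos (by omega), coeff_eq_zero_of_natDegree_lt (by omega), mul_zero]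
  exact ⟨a, b, habq⟩

/-- if `p, q` and `p', q'` are pairs of polynomials of degree at most
`N ≥ 1` with `max(deg p, deg q) = N = max(deg p', deg q')`, unit resultants
`Res_N(p,q) = Res_N(p',q') = 1` and defining the same rational map (`p·q' = p'·q`),
then `(p', q') = (c·p, c·q)` for some `2N`-th root of unity `c`. -/
theorem fibre_of_rational_map (N : ℕ) (hN : 1 ≤ N) (p q p' q' : Polynomial ℂ)
    (hp : p.natDegree ≤ N) (hq : q.natDegree ≤ N)
    (hp' : p'.natDegree ≤ N) (hq' : q'.natDegree ≤ N)
    (hmax : max p.natDegree q.natDegree = N)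
    (hmax' : max p'.natDegree q'.natDegree = N)
    (hres : sylvesterRes N p q = 1) (hres' : sylvesterRes N p' q' = 1)
    (heq : p * q' = p' * q) :
    ∃ c : ℂ, c ^ (2 * N) = 1 ∧ p' = Polynomial.C c * p ∧ q' = Polynomial.C c * q := by
  have hc : IsCoprime p q := isCoprime_of_sylvesterRes N hN p q hp hq hres
  have hc' : IsCoprime p' q' := isCoprime_of_sylvesterRes N hN p' q' hp' hq' hres'
  have hpp' : p ∣ p' := hc.dvd_of_dvd_mul_right ⟨q', heq.symm⟩
  have hp'p : p' ∣ p := hc'.dvd_of_dvd_mul_right ⟨q, heq⟩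
  have hqq' : q ∣ q' := hc.symm.dvd_of_dvd_mul_right ⟨p', by linear_combination heq⟩
  have hq'q : q' ∣ q := hc'.symm.dvd_of_dvd_mul_right ⟨p, by linear_combination -heq⟩
  obtain ⟨u1, hu1⟩ := (associated_of_dvd_dvd hpp' hp'p)
  obtain ⟨u2, hu2⟩ := (associated_of_dvd_dvd hqq' hq'q)
  obtain ⟨c1, hc1u, hc1⟩ := Polynomial.isUnit_iff.mp u1.isUnit
  obtain ⟨c2, hc2u, hc2⟩ := Polynomial.isUnit_iff.mp u2.isUnit
  have hp'eq : p' = C c1 * p := by rw [← hu1, ← hc1]; ring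
  have hq'eq : q' = C c2 * q := by rw [← hu2, ← hc2]; ring
  have key : ∃ c : ℂ, p' = Polynomial.C c * p ∧ q' = Polynomial.C c * q := by
    by_cases hpz : p = 0
    · exact ⟨c2, by rw [hp'eq, hpz, mul_zero, mul_zero], hq'eq⟩
    · by_cases hqz : q = 0
      · exact ⟨c1, hp'eq, by rw [hq'eq, hqz, mul_zero, mul_zero]⟩
      · have h5 : C c2 * (p * q) = C c1 * (p * q) := by
          have h6 := heq
          rw [hp'eq, hq'eq] at h6
          linear_combination h6
        have hc12 : c1 = c2 := by
          have hpq : p * q ≠ 0 := mul_ne_zero hpz hqz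
          exact (C_injective (mul_right_cancel₀ hpq h5)).symm
        exact ⟨c1, hp'eq, hc12 ▸ hq'eq⟩
  obtain ⟨c, hcp, hcq⟩ := key
  refine ⟨c, ?_, hcp, hcq⟩
  have := hres'
  rw [hcp, hcq, sylvesterRes_smul, hres, mul_one] at this
  exact this
end

section
/- Let N ≥ 2 and t ∈ ℝ. Let L be the 1×N quaternionic matrix with every entry equal to 1, and let M be the diagonal N×N quaternionic matrix with diagonal entries m₁ = cos(πt)·i + sin(πt)·j, m₂ = −cos(πt)·i − sin(πt)·j, and m_k = (k−1)·i for 3 ≤ k ≤ N. For x ∈ ℍ let Δ_x be the (N+1)×N quaternionic matrix with first row L and remaining block M − x·Id_N. Then for every x ∈ ℍ, Δ_x†·Δ_x equals the real N×N matrix J + D, where J is the all-ones matrix and D is the diagonal matrix with entries D_{kk} = |m_k − x|² (the squared quaternionic norm), and this real symmetric matrix is positive definite; in particular Δ_x†·Δ_x has real entries and is invertible for all x ∈ ℍ. -/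
open Quaternion Matrix

/-- The `(N+1) × N` quaternionic ADHM operator `Δ_x` built from a `1 × N` row `L`
and an `N × N` matrix `M`: its first row is `L` and its remaining block is
`M − x·Id_N`. -/
noncomputable def adhmDelta (N : ℕ) (L : Matrix (Fin 1) (Fin N) ℍ[ℝ])
    (M : Matrix (Fin N) (Fin N) ℍ[ℝ]) (x : ℍ[ℝ]) : Matrix (Fin (N + 1)) (Fin N) ℍ[ℝ] :=
  Matrix.of fun i j =>
    Fin.cases (L 0 j) (fun i' => ((M - Matrix.diagonal fun _ => x : Matrix (Fin N) (Fin N) ℍ[ℝ]) i' j)) i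

/-- The diagonal entries of the loop of ADHM data exchanging two skyrmions:
`m₁ = cos(πt)·i + sin(πt)·j`, `m₂ = −cos(πt)·i − sin(πt)·j`, `m_k = (k−1)·i`
for `3 ≤ k ≤ N` (here indexed from `0`). -/
noncomputable def exchangeDiag (N : ℕ) (t : ℝ) : Fin N → ℍ[ℝ] := fun k =>
  if (k : ℕ) = 0 then ⟨0, Real.cos (Real.pi * t), Real.sin (Real.pi * t), 0⟩
  else if (k : ℕ) = 1 then ⟨0, -Real.cos (Real.pi * t), -Real.sin (Real.pi * t), 0⟩
  else ⟨0, ((k : ℕ) : ℝ), 0, 0⟩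

/-! The constraint matrix is `Δ_x†Δ_x = L†L + (M - x)†(M - x)`, which for `L = (1, …, 1)` and
`M = diag(m_k)` is `J + diag |m_k - x|²`. Its quadratic form `(∑ v_k)² + ∑ |m_k - x|² v_k²`
can only vanish for `v` supported where `m_k = x` and with `∑ v_k = 0`; as the `m_k` are
pairwise distinct, that support has at most one point, so `v = 0`. -/

theorem Matrix.dotProduct_allOnes_add_diagonal_mulVec {n : Type*} [Fintype n] [DecidableEq n]
    (d v : n → ℝ) :
    star v ⬝ᵥ ((of fun _ _ => (1 : ℝ)) + diagonal d) *ᵥ v = (∑ i, v i) ^ 2 + ∑ i, d i * v i ^ 2 := by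
  have hJ : (of fun _ _ => (1 : ℝ) : Matrix n n ℝ) *ᵥ v = fun _ => ∑ j, v j := by
    ext
    simp [mulVec, dotProduct]
  rw [add_mulVec, dotProduct_add, hJ, funext (mulVec_diagonal d v)]
  simp only [dotProduct, star_trivial, sq, ← Finset.sum_mul]
  congr 1
  exact Finset.sum_congr rfl fun i _ => by ring

theorem Matrix.posDef_allOnes_add_diagonal {n : Type*} [Fintype n] [DecidableEq n] {d : n → ℝ}
    (hd : ∀ i, 0 ≤ d i) (hzero : {i | d i = 0}.Subsingleton) :
    ((of fun _ _ => (1 : ℝ)) + diagonal d).PosDef := by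
  refine posDef_iff_dotProduct_mulVec.mpr ⟨?_, fun v hv => ?_⟩
  · exact (isHermitian_iff_isSymm.mpr (by ext; rfl)).add (isHermitian_diagonal d)
  rw [dotProduct_allOnes_add_diagonal_mulVec]
  obtain ⟨c, hc⟩ := Function.ne_iff.mp hv
  have hterm : ∀ i, 0 ≤ d i * v i ^ 2 := fun i => mul_nonneg (hd i) (sq_nonneg _)
  by_contra hnonpos
  have hsum : ∑ i, d i * v i ^ 2 = 0 := by
    linarith [sq_nonneg (∑ i, v i), Finset.sum_nonneg fun i (_ : i ∈ Finset.univ) => hterm i]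
  have hsq : (∑ i, v i) ^ 2 = 0 := by
    linarith [sq_nonneg (∑ i, v i)]
  have hd_zero : ∀ i, v i ≠ 0 → d i = 0 := fun i hi => by
    have := (Finset.sum_eq_zero_iff_of_nonneg fun i _ => hterm i).mp hsum i (Finset.mem_univ i)
    simpa [hi] using this
  have hsupp : ∀ i, i ≠ c → v i = 0 := fun i hi => by
    by_contra hvi
    exact hi (hzero (hd_zero i hvi) (hd_zero c hc))
  rw [Finset.sum_eq_single c (fun i _ => hsupp i) (by simp)] at hsq
  exact hc (pow_eq_zero_iff two_ne_zero |>.mp hsq)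

theorem adhmDelta_conjTranspose_mul_self (N : ℕ) (L : Matrix (Fin 1) (Fin N) ℍ[ℝ])
    (M : Matrix (Fin N) (Fin N) ℍ[ℝ]) (x : ℍ[ℝ]) :
    (adhmDelta N L M x)ᴴ * adhmDelta N L M x =
      Lᴴ * L + (M - diagonal fun _ => x)ᴴ * (M - diagonal fun _ => x) := by
  ext a b : 1
  simp [mul_apply, Fin.sum_univ_succ, adhmDelta, diagonal_apply, eq_comm, apply_ite star]

theorem adhmDelta_allOnes_diagonal_conjTranspose_mul_self (N : ℕ) (m : Fin N → ℍ[ℝ])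
    (x : ℍ[ℝ]) :
    (adhmDelta N (of fun _ _ => 1) (diagonal m) x)ᴴ * adhmDelta N (of fun _ _ => 1) (diagonal m) x =
      ((of fun _ _ => (1 : ℝ)) + diagonal fun a => normSq (m a - x)).map (fun r => (r : ℍ[ℝ])) := by
  rw [adhmDelta_conjTranspose_mul_self, diagonal_sub, diagonal_conjTranspose,
    diagonal_mul_diagonal, Matrix.map_add _ (fun _ _ => Quaternion.coe_add _ _),
    diagonal_map (Quaternion.coe_zero)]
  congr 1
  · ext a b : 1
    simp [mul_apply]
  · simp_rw [Pi.star_apply, star_mul_self]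

-- `m₁ = -m₂` is a unit vector, while `m_k = (k - 1)·i` has norm at least `2` for `k ≥ 3`.
theorem exchangeDiag_injective (N : ℕ) (t : ℝ) : Function.Injective (exchangeDiag N t) := by
  have hcs := Real.sin_sq_add_cos_sq (Real.pi * t)
  have hcos := Real.abs_cos_le_one (Real.pi * t)
  rintro ⟨_ | _ | a, ha⟩ ⟨_ | _ | b, hb⟩ h <;>
    have hI := congrArg QuaternionAlgebra.imI h <;>
    have hJ := congrArg QuaternionAlgebra.imJ h <;>
    simp only [exchangeDiag] at hI hJ <;> simp at hI hJ ⊢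
  all_goals first | exact hI | nlinarith [abs_le.mp hcos]

theorem adhm_exchange_loop_constraints_general (N : ℕ) (t : ℝ) :
    ∀ x : ℍ[ℝ],
      ((adhmDelta N (Matrix.of fun _ _ => (1 : ℍ[ℝ])) (Matrix.diagonal (exchangeDiag N t)) x)ᴴ *
          adhmDelta N (Matrix.of fun _ _ => (1 : ℍ[ℝ])) (Matrix.diagonal (exchangeDiag N t)) x
        = ((Matrix.of fun _ _ => (1 : ℝ)) +
            Matrix.diagonal fun a => Quaternion.normSq (exchangeDiag N t a - x)).map
              (fun r => (r : ℍ[ℝ]))) ∧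
      Matrix.PosDef ((Matrix.of fun _ _ => (1 : ℝ)) +
          Matrix.diagonal fun a => Quaternion.normSq (exchangeDiag N t a - x)) ∧
      (∀ a b, ∃ r : ℝ,
        ((adhmDelta N (Matrix.of fun _ _ => (1 : ℍ[ℝ])) (Matrix.diagonal (exchangeDiag N t)) x)ᴴ *
          adhmDelta N (Matrix.of fun _ _ => (1 : ℍ[ℝ])) (Matrix.diagonal (exchangeDiag N t)) x)
            a b = (r : ℍ[ℝ])) ∧
      IsUnit ((adhmDelta N (Matrix.of fun _ _ => (1 : ℍ[ℝ])) (Matrix.diagonal (exchangeDiag N t)) x)ᴴ *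
          adhmDelta N (Matrix.of fun _ _ => (1 : ℍ[ℝ])) (Matrix.diagonal (exchangeDiag N t)) x) := by
  intro x
  have hΔ := adhmDelta_allOnes_diagonal_conjTranspose_mul_self N (exchangeDiag N t) x
  have hdist_zero : {i | normSq (exchangeDiag N t i - x) = 0}.Subsingleton := fun i hi j hj =>
    exchangeDiag_injective N t <|
      (sub_eq_zero.mp (normSq_eq_zero.mp hi)).trans (sub_eq_zero.mp (normSq_eq_zero.mp hj)).symm
  have hpos := posDef_allOnes_add_diagonal (fun _ => normSq_nonneg) hdist_zero
  refine ⟨hΔ, hpos, fun a b => ⟨_, by rw [hΔ]; rfl⟩, ?_⟩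
  rw [hΔ]
  exact hpos.isUnit.map (algebraMap ℝ ℍ[ℝ]).mapMatrix

/-- for the exchange loop of ADHM data with `L = (1, …, 1)` and
`M = diag(m₁, …, m_N)`, for every `x ∈ ℍ` one has `Δ_x†·Δ_x = J + D`, where `J` is
the real all-ones matrix and `D = diag(|m_k − x|²)`; this real symmetric matrix is
positive definite, so `Δ_x†·Δ_x` has real entries and is invertible for all `x`. -/
theorem adhm_exchange_loop_constraints (N : ℕ) (hN : 2 ≤ N) (t : ℝ) :
    ∀ x : ℍ[ℝ],
      ((adhmDelta N (Matrix.of fun _ _ => (1 : ℍ[ℝ])) (Matrix.diagonal (exchangeDiag N t)) x)ᴴ *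
          adhmDelta N (Matrix.of fun _ _ => (1 : ℍ[ℝ])) (Matrix.diagonal (exchangeDiag N t)) x
        = ((Matrix.of fun _ _ => (1 : ℝ)) +
            Matrix.diagonal fun a => Quaternion.normSq (exchangeDiag N t a - x)).map
              (fun r => (r : ℍ[ℝ]))) ∧
      Matrix.PosDef ((Matrix.of fun _ _ => (1 : ℝ)) +
          Matrix.diagonal fun a => Quaternion.normSq (exchangeDiag N t a - x)) ∧
      (∀ a b, ∃ r : ℝ,
        ((adhmDelta N (Matrix.of fun _ _ => (1 : ℍ[ℝ])) (Matrix.diagonal (exchangeDiag N t)) x)ᴴ *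
          adhmDelta N (Matrix.of fun _ _ => (1 : ℍ[ℝ])) (Matrix.diagonal (exchangeDiag N t)) x)
            a b = (r : ℍ[ℝ])) ∧
      IsUnit ((adhmDelta N (Matrix.of fun _ _ => (1 : ℍ[ℝ])) (Matrix.diagonal (exchangeDiag N t)) x)ᴴ *
          adhmDelta N (Matrix.of fun _ _ => (1 : ℍ[ℝ])) (Matrix.diagonal (exchangeDiag N t)) x) :=
  adhm_exchange_loop_constraints_general N t
end
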